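/- arXiv:1910.11808 — 2 statements merged into one kernel-verified Lean document; each statement's English description precedes it below -/
import Mathlib

section
/- Let c(n) be the coefficient of X^n in the formal power series X(1 − 2X)²/(1 − 3X + X²)² over ℝ, and let α = (1 + √5)/2. Then c(n)/(n·α^{2n}) converges, as n → ∞, to (7 − 3√5)/10. (The series X(1 − 2X)²/(1 − 3X + X²)² is the generating function, by size, of the total number of nodes on the rightmost branch over all Elena trees; hence the average number of nodes on the rightmost branch of a random Elena tree with n nodes is asymptotic to (5 − √5)n/10.) -/
/-!
Since `1 - 3X + X² = (1 - φ²X)(1 - ψ²X)` with `φ = (1 + √5)/2`, `ψ = (1 - √5)/2`, a partial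
fraction decomposition expresses the series through the geometric series `∑ φ²ⁿXⁿ`, `∑ ψ²ⁿXⁿ` and
their squares, whence `c(n) = (ψ⁴/5 · n + O(1)) φ²ⁿ + O(n ψ²ⁿ)`. As `|ψ| < 1 < φ`, this gives
`c(n) / (n φ²ⁿ) → ψ⁴/5 = (7 - 3√5)/10`.
-/

open PowerSeries Filter Finset Topology

open Real goldenRatio

namespace PowerSeries

variable {R : Type*} [CommRing R]

def geomSeries (r : R) : R⟦X⟧ := mk (r ^ ·)

theorem geomSeries_mul_one_sub_C_mul_X (r : R) : geomSeries r * (1 - C r * X) = 1 := by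
  simpa [geomSeries, rescale_mk] using congrArg (rescale r) (mk_one_mul_one_sub_eq_one (S := R))

@[simp]
theorem coeff_geomSeries (r : R) (n : ℕ) : coeff n (geomSeries r) = r ^ n :=
  coeff_mk _ _

theorem coeff_geomSeries_sq (r : R) (n : ℕ) :
    coeff n (geomSeries r ^ 2) = (n + 1) * r ^ n := by
  rw [sq, coeff_mul, sum_congr rfl fun p hp => by
    rw [coeff_geomSeries, coeff_geomSeries, ← pow_add, mem_antidiagonal.1 hp]]
  simp

theorem inv_one_sub_C_mul_X_mul_one_sub_C_mul_X {k : Type*} [Field k] (a b : k) :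
    ((1 - C a * X) * (1 - C b * X))⁻¹ = geomSeries a * geomSeries b := by
  rw [inv_eq_iff_mul_eq_one (by simp), mul_mul_mul_comm, geomSeries_mul_one_sub_C_mul_X,
    geomSeries_mul_one_sub_C_mul_X, one_mul]

end PowerSeries

theorem one_sub_three_mul_X_add_X_sq_eq :
    (1 - 3 * X + X ^ 2 : ℝ⟦X⟧) = (1 - C (φ ^ 2) * X) * (1 - C (ψ ^ 2) * X) := by
  have hsum : C (φ ^ 2) + C (ψ ^ 2) = (3 : ℝ⟦X⟧) := by
    rw [← map_add, goldenRatio_sq, goldenConj_sq, add_add_add_comm, goldenRatio_add_goldenConj]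
    norm_num [map_ofNat]
  have hprod : C (φ ^ 2) * C (ψ ^ 2) = (1 : ℝ⟦X⟧) := by
    rw [← map_mul, ← mul_pow, goldenRatio_mul_goldenConj]
    norm_num
  linear_combination X * hsum - X ^ 2 * hprod

theorem Polynomial.X_mul_one_sub_two_mul_X_sq_eq :
    (Polynomial.X * (1 - 2 * Polynomial.X) ^ 2 : Polynomial ℝ) =
      .C (ψ ^ 4 / 5) * (1 - .C (ψ ^ 2) * .X) ^ 2
      - .C ((8 * φ + 27 * ψ) / 25) * (1 - .C (φ ^ 2) * .X) * (1 - .C (ψ ^ 2) * .X) ^ 2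
      + .C (φ ^ 4 / 5) * (1 - .C (φ ^ 2) * .X) ^ 2
      - .C ((27 * φ + 8 * ψ) / 25) * (1 - .C (φ ^ 2) * .X) ^ 2 * (1 - .C (ψ ^ 2) * .X) := by
  refine Polynomial.funext fun x => ?_
  simp only [Polynomial.eval_add, Polynomial.eval_sub, Polynomial.eval_mul, Polynomial.eval_pow,
    Polynomial.eval_C, Polynomial.eval_X, Polynomial.eval_one, Polynomial.eval_ofNat]
  have := goldenRatio_add_goldenConj
  have := goldenRatio_mul_goldenConj
  grind

theorem X_mul_one_sub_two_mul_X_sq_mul_inv_sq_eq :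
    (X * (1 - 2 * X) ^ 2 * ((1 - 3 * X + X ^ 2 : ℝ⟦X⟧)⁻¹) ^ 2) =
      C (ψ ^ 4 / 5) * geomSeries (φ ^ 2) ^ 2 - C ((8 * φ + 27 * ψ) / 25) * geomSeries (φ ^ 2)
      + C (φ ^ 4 / 5) * geomSeries (ψ ^ 2) ^ 2 - C ((27 * φ + 8 * ψ) / 25) * geomSeries (ψ ^ 2) := by
  have hP := congrArg Polynomial.coeToPowerSeries.ringHom Polynomial.X_mul_one_sub_two_mul_X_sq_eq
  simp only [map_add, map_sub, map_mul Polynomial.coeToPowerSeries.ringHom,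
    map_pow Polynomial.coeToPowerSeries.ringHom, map_one, map_ofNat,
    Polynomial.coeToPowerSeries.ringHom_apply, Polynomial.coe_C, Polynomial.coe_X] at hP
  rw [one_sub_three_mul_X_add_X_sq_eq, inv_one_sub_C_mul_X_mul_one_sub_C_mul_X, hP]
  have hφ := geomSeries_mul_one_sub_C_mul_X (φ ^ 2)
  have hψ := geomSeries_mul_one_sub_C_mul_X (ψ ^ 2)
  set g := geomSeries (φ ^ 2)
  set h := geomSeries (ψ ^ 2)
  set u := 1 - C (φ ^ 2) * X
  set v := 1 - C (ψ ^ 2) * X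
  calc _ = C (ψ ^ 4 / 5) * g ^ 2 * (h * v) ^ 2
          - C ((8 * φ + 27 * ψ) / 25) * g * (g * u) * (h * v) ^ 2
          + C (φ ^ 4 / 5) * h ^ 2 * (g * u) ^ 2
          - C ((27 * φ + 8 * ψ) / 25) * h * (g * u) ^ 2 * (h * v) := by ring
    _ = _ := by rw [hφ, hψ]; ring

theorem coeff_X_mul_one_sub_two_mul_X_sq_mul_inv_sq (n : ℕ) :
    coeff n (X * (1 - 2 * X) ^ 2 * ((1 - 3 * X + X ^ 2 : ℝ⟦X⟧)⁻¹) ^ 2) =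
      (ψ ^ 4 / 5 * (n + 1) - (8 * φ + 27 * ψ) / 25) * (φ ^ 2) ^ n
        + (φ ^ 4 / 5 * (n + 1) - (27 * φ + 8 * ψ) / 25) * (ψ ^ 2) ^ n := by
  simp only [X_mul_one_sub_two_mul_X_sq_mul_inv_sq_eq, map_add, map_sub, coeff_C_mul,
    coeff_geomSeries_sq, coeff_geomSeries]
  ring

theorem tendsto_div_mul_pow {a b A B C D : ℝ} (hb : |b| < a) :
    Tendsto (fun n : ℕ => ((B * (n + 1) - A) * a ^ n + (D * (n + 1) - C) * b ^ n) / (n * a ^ n))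
      atTop (𝓝 B) := by
  have ha : 0 < a := (abs_nonneg b).trans_lt hb
  have hq : |b / a| < 1 := by rwa [abs_div, abs_of_pos ha, div_lt_one ha]
  have hinv := tendsto_one_div_atTop_nhds_zero_nat (𝕜 := ℝ)
  have hlim := ((hinv.const_mul (B - A)).const_add B).add
    (((hinv.const_mul (D - C)).const_add D).mul (tendsto_pow_atTop_nhds_zero_of_abs_lt_one hq))
  simp only [mul_zero, add_zero] at hlim
  refine hlim.congr' ((eventually_ne_atTop 0).mono fun n hn => ?_)
  have : (n : ℝ) ≠ 0 := Nat.cast_ne_zero.2 hn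
  rw [div_pow]
  field_simp
  ring

theorem abs_goldenConj_sq_lt_goldenRatio_sq : |ψ ^ 2| < φ ^ 2 := by
  rw [abs_of_nonneg (sq_nonneg ψ), goldenRatio_sq, goldenConj_sq]
  linarith [goldenConj_neg, goldenRatio_pos]

theorem goldenConj_pow_four_div_five : ψ ^ 4 / 5 = (7 - 3 * √5) / 10 := by
  rw [show ψ ^ 4 = (ψ ^ 2) ^ 2 by ring, goldenConj_sq]
  grind

/-- Let `c(n)` be the coefficient of `Xⁿ` in `X(1 − 2X)²/(1 − 3X + X²)²` over
`ℝ` and `α = (1 + √5)/2`.  Then `c(n)/(n·α^(2n)) → (7 − 3√5)/10`. -/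
theorem avg_rightmost_branch :
    Filter.Tendsto
      (fun n : ℕ =>
        PowerSeries.coeff (R := ℝ) n
            (PowerSeries.X * (1 - 2 * PowerSeries.X) ^ 2 *
              (((1 : PowerSeries ℝ) - 3 * PowerSeries.X + PowerSeries.X ^ 2)⁻¹) ^ 2) /
          ((n : ℝ) * ((1 + Real.sqrt 5) / 2) ^ (2 * n)))
      Filter.atTop (nhds ((7 - 3 * Real.sqrt 5) / 10)) := by
  have hlim := tendsto_div_mul_pow (A := (8 * φ + 27 * ψ) / 25) (B := ψ ^ 4 / 5)
    (C := (27 * φ + 8 * ψ) / 25) (D := φ ^ 4 / 5) abs_goldenConj_sq_lt_goldenRatio_sq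
  rw [show (1 + √5) / 2 = φ from rfl, ← goldenConj_pow_four_div_five]
  refine hlim.congr fun n => ?_
  rw [coeff_X_mul_one_sub_two_mul_X_sq_mul_inv_sq, pow_mul]
end

section
/- For h ≥ 0, let F_h(X) = Σ_{n≥0} d(n,h) X^n ∈ ℤ⟦X⟧, where d(n,h) is the number of nondecreasing Dyck words of semilength n whose height is at most h (with d(0,h) = 1, counting the empty word). Then for every h ≥ 1, the formal power series identity (1 − 2X + X^{h+1})·(F_h(X) − 1) = X(1 − X)·F_{h−1}(X) holds. (Equivalently, the generating functions E_h(z) of Elena trees of height at most h satisfy E_h = z + z(1−z)/(1 − 2z + z^h) · E_{h−1}.) -/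
/-- Height of the prefix of length `i` of the word `w`
(`true` = U-step, `false` = D-step): number of U's minus number of D's. -/
def prefixHeight (w : List Bool) (i : ℕ) : ℤ :=
  ((w.take i).count true : ℤ) - ((w.take i).count false : ℤ)

/-- `w` is a Dyck word: every prefix has nonnegative height and the whole word
has height 0 (equally many U's and D's). -/
def IsDyckWord (w : List Bool) : Prop :=
  (∀ i, i ≤ w.length → 0 ≤ prefixHeight w i) ∧ prefixHeight w w.length = 0

/-- A valley at (0-based) position `i`: a D-step immediately followed by a U-step. -/
def IsValley (w : List Bool) (i : ℕ) : Prop :=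
  w[i]? = some false ∧ w[i + 1]? = some true

/-- A nondecreasing Dyck word: a Dyck word whose valley altitudes, read left to
right, form a nondecreasing sequence.  The altitude of a valley at position `i`
is the height of the prefix ending at that D-step, i.e. of length `i + 1`. -/
def IsNondecDyck (w : List Bool) : Prop :=
  IsDyckWord w ∧ ∀ i j, IsValley w i → IsValley w j → i ≤ j →
    prefixHeight w (i + 1) ≤ prefixHeight w (j + 1)

/-- The set of nondecreasing Dyck words of semilength `n`. -/
def nondecDyck (n : ℕ) : Set (List Bool) :=
  {w | w.length = 2 * n ∧ IsNondecDyck w}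

/-- `d n` = number of nondecreasing Dyck words of semilength `n`. -/
noncomputable def numNondecDyck (n : ℕ) : ℕ := (nondecDyck n).ncard

/-- `d(n, h)`: the number of nondecreasing Dyck words of semilength `n` whose
height is at most `h`. -/
noncomputable def numNondecDyckHeightLe (n h : ℕ) : ℕ :=
  {w : List Bool | w.length = 2 * n ∧ IsNondecDyck w ∧
    ∀ i, i ≤ w.length → prefixHeight w i ≤ (h : ℤ)}.ncard

/-- `F_h(X) = Σ d(n,h) Xⁿ ∈ ℤ⟦X⟧`. -/
noncomputable def heightGF (h : ℕ) : PowerSeries ℤ :=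
  PowerSeries.mk fun n => (numNondecDyckHeightLe n h : ℤ)

/-!
A nonempty Dyck word factors uniquely as `U c D v` with `c` and `v` Dyck words (first return to
height `0`). If `v` is nonempty, the valley at the junction has altitude `0` while every valley
inside `U c D` has altitude at least `1`, so a nondecreasing word can have no valley in `c`:
`U c D` is a pyramid `Uᵏ⁺¹ Dᵏ⁺¹` with `k < h`. If `v` is empty, `c` is any nondecreasing word of
height at most `h - 1`. Hence `G = F_h - 1` satisfies `G = X (F_{h-1} + (1 + X + ⋯ + X^(h-1)) G)`,
and multiplying by `1 - X` gives the identity.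
-/

open PowerSeries

section PrefixHeight

variable {u v w : List Bool} {i : ℕ}

@[simp] lemma prefixHeight_zero (w : List Bool) : prefixHeight w 0 = 0 := by
  simp [prefixHeight]

@[simp] lemma prefixHeight_nil (i : ℕ) : prefixHeight [] i = 0 := by
  simp [prefixHeight]

lemma prefixHeight_cons_succ (b : Bool) (w : List Bool) (i : ℕ) :
    prefixHeight (b :: w) (i + 1) = prefixHeight w i + if b then 1 else -1 := by
  cases b <;> simp [prefixHeight] <;> ring

lemma prefixHeight_succ (hi : i < w.length) :
    prefixHeight w (i + 1) = prefixHeight w i + if w[i] then 1 else -1 := by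
  rcases hw : w[i] <;>
    simp [prefixHeight, List.take_add_one, List.getElem?_eq_getElem hi, hw] <;> ring

lemma prefixHeight_take (w : List Bool) (m i : ℕ) :
    prefixHeight (w.take m) i = prefixHeight w (min i m) := by
  simp [prefixHeight, List.take_take]

lemma prefixHeight_of_length_le (hi : w.length ≤ i) :
    prefixHeight w i = prefixHeight w w.length := by
  simp [prefixHeight, List.take_of_length_le hi]

lemma forall_le_length_prefixHeight_iff {P : ℤ → Prop} :
    (∀ i, i ≤ w.length → P (prefixHeight w i)) ↔ ∀ i, P (prefixHeight w i) := by
  refine ⟨fun h i => ?_, fun h i _ => h i⟩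
  rcases le_total i w.length with hi | hi
  · exact h i hi
  · rw [prefixHeight_of_length_le hi]; exact h _ le_rfl

lemma prefixHeight_append_of_le (hi : i ≤ u.length) :
    prefixHeight (u ++ v) i = prefixHeight u i := by
  simp [prefixHeight, List.take_append_of_le_length hi]

lemma prefixHeight_append_length_add (u v : List Bool) (i : ℕ) :
    prefixHeight (u ++ v) (u.length + i) = prefixHeight u u.length + prefixHeight v i := by
  simp only [prefixHeight, List.take_append, List.take_length, List.count_append,
    Nat.add_sub_cancel_left, List.take_of_length_le (Nat.le_add_right u.length i)]
  push_cast
  ring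

end PrefixHeight

section Valley

variable {u v w : List Bool} {i : ℕ}

lemma IsValley.succ_lt_length (h : IsValley w i) : i + 1 < w.length :=
  (List.getElem?_eq_some_iff.mp h.2).1

@[simp] lemma isValley_cons_succ (b : Bool) : IsValley (b :: w) (i + 1) ↔ IsValley w i :=
  Iff.rfl

@[simp] lemma not_isValley_true_cons_zero : ¬IsValley (true :: w) 0 := by
  simp [IsValley]

@[simp] lemma not_isValley_nil : ¬IsValley [] i := by
  simp [IsValley]

lemma isValley_append_of_lt (hi : i + 1 < u.length) : IsValley (u ++ v) i ↔ IsValley u i := by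
  simp only [IsValley, List.getElem?_append_left hi,
    List.getElem?_append_left (by omega : i < u.length)]

lemma isValley_append_length_add (u v : List Bool) (i : ℕ) :
    IsValley (u ++ v) (u.length + i) ↔ IsValley v i := by
  simp only [IsValley, Nat.add_assoc, List.getElem?_append_right (Nat.le_add_right _ _),
    Nat.add_sub_cancel_left]

end Valley

lemma isDyckWord_iff {w : List Bool} :
    IsDyckWord w ↔ (∀ i, 0 ≤ prefixHeight w i) ∧ prefixHeight w w.length = 0 := by
  rw [IsDyckWord, forall_le_length_prefixHeight_iff]

lemma IsDyckWord.nonneg {w : List Bool} (hw : IsDyckWord w) (i : ℕ) : 0 ≤ prefixHeight w i :=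
  (isDyckWord_iff.mp hw).1 i

lemma isDyckWord_nil : IsDyckWord [] := by
  simp [isDyckWord_iff]

lemma IsDyckWord.exists_eq_true_cons {w : List Bool} (hw : IsDyckWord w) (hne : w ≠ []) :
    ∃ t, w = true :: t := by
  obtain _ | ⟨b, t⟩ := w
  · exact absurd rfl hne
  · have := hw.nonneg 1
    cases b <;> simp [prefixHeight_cons_succ] at this ⊢

lemma IsDyckWord.head?_eq_some_true {v : List Bool} (hv : IsDyckWord v) (hne : v ≠ []) :
    v.head? = some true := by
  obtain ⟨t, rfl⟩ := hv.exists_eq_true_cons hne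
  rfl

def nest (c : List Bool) : List Bool := true :: (c ++ [false])

section Nest

variable {c v : List Bool}

lemma nest_append_eq_cons : nest c ++ v = true :: (c ++ false :: v) := by
  simp [nest]

lemma length_nest_append : (nest c ++ v).length = c.length + 2 + v.length := by
  rw [nest_append_eq_cons, List.length_cons, List.length_append, List.length_cons]
  omega

lemma prefixHeight_nest_append_succ {i : ℕ} (hi : i ≤ c.length) :
    prefixHeight (nest c ++ v) (i + 1) = prefixHeight c i + 1 := by
  rw [nest_append_eq_cons, prefixHeight_cons_succ, prefixHeight_append_of_le hi, if_pos rfl]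

lemma prefixHeight_nest_append_length_add (j : ℕ) :
    prefixHeight (nest c ++ v) (c.length + 2 + j) = prefixHeight c c.length + prefixHeight v j := by
  rw [nest_append_eq_cons, show c.length + 2 + j = c.length + (j + 1) + 1 by omega,
    prefixHeight_cons_succ, prefixHeight_append_length_add, prefixHeight_cons_succ]
  simp only [Bool.false_eq_true, if_false, if_true]
  ring

lemma forall_prefixHeight_nest_append_iff {P : ℤ → Prop} :
    (∀ i, P (prefixHeight (nest c ++ v) i)) ↔
      P 0 ∧ (∀ i, P (prefixHeight c i + 1)) ∧
        ∀ j, P (prefixHeight c c.length + prefixHeight v j) := by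
  constructor
  · intro h
    refine ⟨by simpa using h 0, fun i => ?_, fun j => ?_⟩
    · rcases le_total i c.length with hi | hi
      · simpa only [prefixHeight_nest_append_succ hi] using h (i + 1)
      · rw [prefixHeight_of_length_le hi]
        simpa only [prefixHeight_nest_append_succ le_rfl] using h (c.length + 1)
    · simpa only [prefixHeight_nest_append_length_add] using h (c.length + 2 + j)
  · rintro ⟨h0, hc, hv⟩ i
    rcases i with _ | i
    · simpa using h0
    rcases le_or_gt i c.length with hi | hi
    · rw [prefixHeight_nest_append_succ hi]; exact hc i
    · obtain ⟨j, hj⟩ : ∃ j, i + 1 = c.length + 2 + j := ⟨i - c.length - 1, by omega⟩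
      rw [hj, prefixHeight_nest_append_length_add]; exact hv j

lemma IsDyckWord.nest_append (hc : IsDyckWord c) (hv : IsDyckWord v) :
    IsDyckWord (nest c ++ v) := by
  rw [isDyckWord_iff] at hc hv ⊢
  refine ⟨forall_prefixHeight_nest_append_iff.mpr ⟨le_rfl, fun i => ?_, fun j => ?_⟩, ?_⟩
  · linarith [hc.1 i]
  · linarith [hc.2, hv.1 j]
  · rw [length_nest_append, prefixHeight_nest_append_length_add, hc.2, hv.2, add_zero]

lemma forall_prefixHeight_nest_append_le_iff (hc : IsDyckWord c) (h : ℤ) :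
    (∀ i, prefixHeight (nest c ++ v) i ≤ h + 1) ↔
      (∀ i, prefixHeight c i ≤ h) ∧ ∀ i, prefixHeight v i ≤ h + 1 := by
  refine (forall_prefixHeight_nest_append_iff (P := (· ≤ h + 1))).trans ?_
  simp only [(isDyckWord_iff.mp hc).2, add_le_add_iff_right, zero_add]
  refine ⟨fun H => H.2, fun H => ⟨?_, H⟩⟩
  linarith [H.1 0, prefixHeight_zero c]

lemma prefixHeight_nest_append_pos (hc : IsDyckWord c) {i : ℕ} (h0 : 0 < i)
    (hi : i ≤ c.length + 1) :
    0 < prefixHeight (nest c ++ v) i := by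
  obtain ⟨i, rfl⟩ := Nat.exists_eq_add_of_lt h0
  rw [zero_add, prefixHeight_nest_append_succ (by omega)]
  linarith [hc.nonneg i]

/-- `nest c ++ v` first returns to height `0` after `c.length + 2` steps. -/
lemma nest_append_inj {c' v' : List Bool} (hc : IsDyckWord c) (hc' : IsDyckWord c')
    (h : nest c ++ v = nest c' ++ v') : c = c' ∧ v = v' := by
  have returns : ∀ {c c' v v' : List Bool}, IsDyckWord c → IsDyckWord c' →
      nest c ++ v = nest c' ++ v' → c'.length ≤ c.length := by
    intro c c' v v' hc hc' h
    by_contra! hlt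
    have := prefixHeight_nest_append_pos hc' (v := v') (i := c.length + 2) (by omega) (by omega)
    rw [← h, ← add_zero (c.length + 2), prefixHeight_nest_append_length_add,
      (isDyckWord_iff.mp hc).2] at this
    simp at this
  have hlen : c.length = c'.length := le_antisymm (returns hc' hc h.symm) (returns hc hc' h)
  rw [nest_append_eq_cons, nest_append_eq_cons, List.cons_inj_right] at h
  obtain ⟨rfl, htail⟩ := List.append_inj h hlen
  exact ⟨rfl, by simpa using htail⟩

lemma isValley_nest_append {i : ℕ} :
    IsValley (nest c ++ v) i ↔
      (∃ j, i = j + 1 ∧ IsValley c j) ∨ (i = c.length + 1 ∧ v.head? = some true) ∨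
        ∃ j, i = c.length + 2 + j ∧ IsValley v j := by
  rw [nest_append_eq_cons]
  rcases i with _ | i
  · simp only [not_isValley_true_cons_zero, false_iff]
    rintro (⟨j, hj, -⟩ | ⟨hj, -⟩ | ⟨j, hj, -⟩) <;> omega
  rw [isValley_cons_succ]
  rcases lt_trichotomy (i + 1) c.length with hi | hi | hi
  · rw [isValley_append_of_lt hi]
    constructor
    · exact fun h => Or.inl ⟨i, rfl, h⟩
    · rintro (⟨j, hj, h⟩ | ⟨hj, -⟩ | ⟨j, hj, -⟩)
      · rwa [show i = j by omega]
      all_goals omega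
  · have hnot : ¬IsValley c i := fun h => by have := h.succ_lt_length; omega
    have hlhs : ¬IsValley (c ++ false :: v) i := fun h => by
      have := h.2
      rw [hi, List.getElem?_append_right le_rfl, Nat.sub_self] at this
      simp at this
    refine iff_of_false hlhs ?_
    rintro (⟨j, hj, h⟩ | ⟨hj, -⟩ | ⟨j, hj, -⟩)
    · exact hnot (by rwa [show i = j by omega])
    all_goals omega
  · obtain ⟨k, rfl⟩ : ∃ k, i = c.length + k := ⟨i - c.length, by omega⟩
    have hnot : ¬IsValley c (c.length + k) := fun h => by have := h.succ_lt_length; omega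
    rw [isValley_append_length_add]
    rcases k with _ | k
    · have hhead : IsValley (false :: v) 0 ↔ v.head? = some true := by
        simp [IsValley, List.head?_eq_getElem?]
      rw [hhead]
      refine ⟨fun h => Or.inr (Or.inl ⟨rfl, h⟩), ?_⟩
      rintro (⟨j, hj, h⟩ | ⟨-, h⟩ | ⟨j, hj, -⟩)
      · exact absurd (by rwa [show c.length + 0 = j by omega]) hnot
      · exact h
      · omega
    · rw [isValley_cons_succ]
      refine ⟨fun h => Or.inr (Or.inr ⟨k, by omega, h⟩), ?_⟩
      rintro (⟨j, hj, h⟩ | ⟨hj, -⟩ | ⟨j, hj, h⟩)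
      · exact absurd (by rwa [show c.length + (k + 1) = j by omega]) hnot
      · omega
      · rwa [show k = j by omega]

end Nest

/-- Cut `t` at the first step that takes the height below `0`. -/
lemma exists_isDyckWord_append_false_cons {t : List Bool} {k : ℕ} (hk : prefixHeight t k < 0) :
    ∃ c v, IsDyckWord c ∧ t = c ++ false :: v := by
  classical
  have hex : ∃ k, prefixHeight t k < 0 := ⟨k, hk⟩
  obtain ⟨m, hm⟩ : ∃ m, Nat.find hex = m + 1 :=
    Nat.exists_eq_succ_of_ne_zero fun h0 => by simpa [h0] using Nat.find_spec hex
  have hneg : prefixHeight t (m + 1) < 0 := hm ▸ Nat.find_spec hex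
  have hbefore : ∀ i ≤ m, 0 ≤ prefixHeight t i := fun i hi =>
    not_lt.mp (Nat.find_min hex (by omega))
  have hmlen : m < t.length := by
    by_contra! hle
    rw [prefixHeight_of_length_le (by omega)] at hneg
    exact hneg.not_ge (hbefore _ hle)
  have hstep := prefixHeight_succ hmlen
  have htm : t[m] = false := by
    by_contra htrue
    simp only [Bool.not_eq_false] at htrue
    rw [htrue, if_pos rfl] at hstep
    linarith [hbefore m le_rfl]
  refine ⟨t.take m, t.drop (m + 1), isDyckWord_iff.mpr ⟨fun i => ?_, ?_⟩, ?_⟩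
  · rw [prefixHeight_take]; exact hbefore _ (min_le_right _ _)
  · rw [List.length_take_of_le hmlen.le, prefixHeight_take, min_self]
    simp only [htm, Bool.false_eq_true, if_false] at hstep
    linarith [hbefore m le_rfl]
  · rw [← htm, ← List.drop_eq_getElem_cons hmlen, List.take_append_drop]

lemma IsDyckWord.exists_eq_nest_append {w : List Bool} (hw : IsDyckWord w) (hne : w ≠ []) :
    ∃ c v, IsDyckWord c ∧ IsDyckWord v ∧ w = nest c ++ v := by
  obtain ⟨t, rfl⟩ := hw.exists_eq_true_cons hne
  have htotal : prefixHeight t t.length = -1 := by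
    have := (isDyckWord_iff.mp hw).2
    rw [List.length_cons, prefixHeight_cons_succ, if_pos rfl] at this
    linarith
  obtain ⟨c, v, hc, rfl⟩ := exists_isDyckWord_append_false_cons (htotal.trans_lt (by norm_num))
  have hw' : true :: (c ++ false :: v) = nest c ++ v := nest_append_eq_cons.symm
  rw [hw'] at hw ⊢
  refine ⟨c, v, hc, isDyckWord_iff.mpr ⟨fun j => ?_, ?_⟩, rfl⟩
  · have := hw.nonneg (c.length + 2 + j)
    rwa [prefixHeight_nest_append_length_add, (isDyckWord_iff.mp hc).2, zero_add] at this
  · have := (isDyckWord_iff.mp hw).2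
    rwa [length_nest_append, prefixHeight_nest_append_length_add, (isDyckWord_iff.mp hc).2,
      zero_add] at this

def HasMonotoneValleys (w : List Bool) : Prop :=
  ∀ i j, IsValley w i → IsValley w j → i ≤ j →
    prefixHeight w (i + 1) ≤ prefixHeight w (j + 1)

/-- The valley between `nest c` and a nonempty `v` has altitude `0`, below every valley of `c`;
so a valley of `c` is allowed only when `v` is empty. -/
lemma hasMonotoneValleys_nest_append_iff {c v : List Bool} (hc : IsDyckWord c)
    (hv : IsDyckWord v) :
    HasMonotoneValleys (nest c ++ v) ↔
      HasMonotoneValleys c ∧ HasMonotoneValleys v ∧ (v ≠ [] → ∀ i, ¬IsValley c i) := by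
  have hc0 := (isDyckWord_iff.mp hc).2
  have inner : ∀ {i}, IsValley c i →
      prefixHeight (nest c ++ v) (i + 1 + 1) = prefixHeight c (i + 1) + 1 := fun hi =>
    prefixHeight_nest_append_succ hi.succ_lt_length.le
  have outer : ∀ j,
      prefixHeight (nest c ++ v) (c.length + 2 + j + 1) = prefixHeight v (j + 1) := by
    intro j
    rw [add_assoc, prefixHeight_nest_append_length_add, hc0, zero_add]
  have middle : prefixHeight (nest c ++ v) (c.length + 1 + 1) = 0 := by
    simpa [hc0] using prefixHeight_nest_append_length_add (c := c) (v := v) 0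
  constructor
  · intro hw
    refine ⟨fun i j hi hj hij => ?_, fun i j hi hj hij => ?_, fun hne i hi => ?_⟩
    · have := hw (i + 1) (j + 1) (isValley_nest_append.mpr (.inl ⟨i, rfl, hi⟩))
        (isValley_nest_append.mpr (.inl ⟨j, rfl, hj⟩)) (by omega)
      rw [inner hi, inner hj] at this
      linarith
    · have := hw _ _ (isValley_nest_append.mpr (.inr (.inr ⟨i, rfl, hi⟩)))
        (isValley_nest_append.mpr (.inr (.inr ⟨j, rfl, hj⟩))) (by omega)
      rwa [outer, outer] at this
    · have := hw (i + 1) (c.length + 1) (isValley_nest_append.mpr (.inl ⟨i, rfl, hi⟩))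
        (isValley_nest_append.mpr (.inr (.inl ⟨rfl, hv.head?_eq_some_true hne⟩)))
        (by have := hi.succ_lt_length; omega)
      rw [inner hi, middle] at this
      linarith [hc.nonneg (i + 1)]
  · rintro ⟨hmc, hmv, hflat⟩ i j hi hj hij
    have hflat' : ∀ k, IsValley c k → v = [] := fun k hk => by_contra fun hne => hflat hne k hk
    rw [isValley_nest_append] at hi hj
    rcases hi with ⟨i, rfl, hi⟩ | ⟨rfl, hi⟩ | ⟨i, rfl, hi⟩ <;>
      rcases hj with ⟨j, rfl, hj⟩ | ⟨rfl, hj⟩ | ⟨j, rfl, hj⟩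
    · rw [inner hi, inner hj]; linarith [hmc i j hi hj (by omega)]
    · simp [hflat' i hi] at hj
    · simp [hflat' i hi] at hj
    · have := hj.succ_lt_length; omega
    · exact le_rfl
    · rw [middle, outer]; exact hv.nonneg _
    · have := hj.succ_lt_length; omega
    · omega
    · rw [outer, outer]; exact hmv i j hi hj (by omega)

def IsNondecDyckHeightLe (h : ℤ) (w : List Bool) : Prop :=
  IsNondecDyck w ∧ ∀ i, prefixHeight w i ≤ h

lemma isNondecDyckHeightLe_nil_iff {h : ℤ} : IsNondecDyckHeightLe h [] ↔ 0 ≤ h := by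
  simp [IsNondecDyckHeightLe, IsNondecDyck, isDyckWord_nil, IsValley]

lemma isNondecDyckHeightLe_nest_append_iff {c v : List Bool} (hc : IsDyckWord c)
    (hv : IsDyckWord v) (h : ℤ) :
    IsNondecDyckHeightLe (h + 1) (nest c ++ v) ↔
      IsNondecDyckHeightLe h c ∧ IsNondecDyckHeightLe (h + 1) v ∧
        (v ≠ [] → ∀ i, ¬IsValley c i) := by
  change (IsDyckWord _ ∧ HasMonotoneValleys _) ∧ _ ↔ ((IsDyckWord c ∧ HasMonotoneValleys c) ∧ _) ∧
    ((IsDyckWord v ∧ HasMonotoneValleys v) ∧ _) ∧ _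
  rw [hasMonotoneValleys_nest_append_iff hc hv, forall_prefixHeight_nest_append_le_iff hc]
  have := hc.nest_append hv
  tauto

def pyramid : ℕ → List Bool
  | 0 => []
  | k + 1 => nest (pyramid k)

lemma pyramid_succ_eq_nest_append (k : ℕ) : pyramid (k + 1) = nest (pyramid k) ++ [] :=
  (List.append_nil _).symm

lemma length_pyramid (k : ℕ) : (pyramid k).length = 2 * k := by
  induction k with
  | zero => rfl
  | succ k ih => rw [pyramid_succ_eq_nest_append, length_nest_append, ih, List.length_nil]; ring

lemma isDyckWord_pyramid (k : ℕ) : IsDyckWord (pyramid k) := by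
  induction k with
  | zero => exact isDyckWord_nil
  | succ k ih => rw [pyramid_succ_eq_nest_append]; exact ih.nest_append isDyckWord_nil

lemma isNondecDyckHeightLe_pyramid_iff (k : ℕ) (h : ℤ) :
    IsNondecDyckHeightLe h (pyramid k) ↔ (k : ℤ) ≤ h := by
  induction k generalizing h with
  | zero => exact isNondecDyckHeightLe_nil_iff
  | succ k ih =>
    rw [← sub_add_cancel h 1, pyramid_succ_eq_nest_append,
      isNondecDyckHeightLe_nest_append_iff (isDyckWord_pyramid k) isDyckWord_nil, ih,
      isNondecDyckHeightLe_nil_iff]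
    push_cast
    constructor
    · exact fun H => by linarith [H.1]
    · exact fun H => ⟨by linarith, by linarith, fun hne => absurd rfl hne⟩

lemma IsDyckWord.exists_eq_pyramid {w : List Bool} (hw : IsDyckWord w)
    (hval : ∀ i, ¬IsValley w i) : ∃ k, w = pyramid k := by
  induction hlen : w.length using Nat.strong_induction_on generalizing w with
  | _ n ih =>
  rcases eq_or_ne w [] with rfl | hne
  · exact ⟨0, rfl⟩
  obtain ⟨c, v, hc, hv, rfl⟩ := hw.exists_eq_nest_append hne
  have hv0 : v = [] := by
    by_contra hne
    exact hval _ (isValley_nest_append.mpr (.inr (.inl ⟨rfl, hv.head?_eq_some_true hne⟩)))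
  obtain ⟨k, rfl⟩ := ih c.length (by rw [← hlen, length_nest_append]; omega) hc
    (fun i hi => hval (i + 1) (isValley_nest_append.mpr (.inl ⟨i, rfl, hi⟩))) rfl
  exact ⟨k + 1, by rw [hv0, pyramid_succ_eq_nest_append]⟩

lemma not_isValley_pyramid (k i : ℕ) : ¬IsValley (pyramid k) i := by
  induction k generalizing i with
  | zero => exact not_isValley_nil
  | succ k ih =>
    rw [pyramid_succ_eq_nest_append, isValley_nest_append]
    rintro (⟨j, -, hj⟩ | ⟨-, h⟩ | ⟨j, -, hj⟩)
    · exact ih j hj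
    · simp at h
    · exact not_isValley_nil hj

def nondecDyckHeightLe (n h : ℕ) : Set (List Bool) :=
  {w | w.length = 2 * n ∧ IsNondecDyckHeightLe h w}

lemma numNondecDyckHeightLe_eq_ncard (n h : ℕ) :
    numNondecDyckHeightLe n h = (nondecDyckHeightLe n h).ncard := by
  rw [numNondecDyckHeightLe, nondecDyckHeightLe]
  congr 1
  ext w
  exact and_congr_right fun _ => and_congr_right fun _ =>
    forall_le_length_prefixHeight_iff (P := (· ≤ (h : ℤ)))

lemma finite_nondecDyckHeightLe (n h : ℕ) : (nondecDyckHeightLe n h).Finite :=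
  (List.finite_length_eq Bool (2 * n)).subset fun _ hw => hw.1

lemma nondecDyckHeightLe_zero (h : ℕ) : nondecDyckHeightLe 0 h = {[]} := by
  ext w
  simp only [nondecDyckHeightLe, Set.mem_ofPred_eq, Set.mem_singleton_iff, mul_zero,
    List.length_eq_zero_iff]
  exact ⟨And.left, fun hw => ⟨hw, hw ▸ isNondecDyckHeightLe_nil_iff.mpr (Int.natCast_nonneg _)⟩⟩

lemma nil_notMem_nondecDyckHeightLe_succ (n h : ℕ) : [] ∉ nondecDyckHeightLe (n + 1) h :=
  fun hw => by simpa using hw.1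

lemma nest_injective : Function.Injective nest := fun c c' h => by
  simpa [nest] using h

/-- For `k ≥ n` the truncated `n - k` is `0`, and removing `[]` leaves nothing. -/
lemma nondecDyckHeightLe_succ_succ (n h : ℕ) :
    nondecDyckHeightLe (n + 1) (h + 1) =
      nest '' nondecDyckHeightLe n h ∪
        ⋃ k ∈ (Finset.range (h + 1) : Set ℕ),
          (pyramid (k + 1) ++ ·) '' (nondecDyckHeightLe (n - k) (h + 1) \ {[]}) := by
  ext w
  simp only [nondecDyckHeightLe, Nat.cast_succ, Set.mem_union, Set.mem_image, Set.mem_iUnion,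
    Set.mem_sdiff, Set.mem_ofPred_eq, Set.mem_singleton_iff, Finset.coe_range, Set.mem_Iio,
    exists_prop]
  constructor
  · rintro ⟨hlen, hw⟩
    have hw0 : w ≠ [] := by rintro rfl; simp at hlen
    obtain ⟨c, v, hc, hv, rfl⟩ := hw.1.1.exists_eq_nest_append hw0
    obtain ⟨hc', hv', hflat⟩ := (isNondecDyckHeightLe_nest_append_iff hc hv h).mp hw
    rw [length_nest_append] at hlen
    rcases eq_or_ne v [] with rfl | hne
    · exact .inl ⟨c, ⟨by rw [List.length_nil] at hlen; omega, hc'⟩, (List.append_nil _).symm⟩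
    · obtain ⟨k, rfl⟩ := hc.exists_eq_pyramid (hflat hne)
      rw [isNondecDyckHeightLe_pyramid_iff] at hc'
      rw [length_pyramid] at hlen
      exact .inr ⟨k, by omega, v, ⟨⟨by omega, hv'⟩, hne⟩, rfl⟩
  · rintro (⟨c, ⟨hlen, hc⟩, rfl⟩ | ⟨k, hk, v, ⟨⟨hlen, hv⟩, hne⟩, rfl⟩)
    · refine ⟨by rw [← List.append_nil (nest c), length_nest_append, hlen, List.length_nil]; ring, ?_⟩
      rw [← List.append_nil (nest c), isNondecDyckHeightLe_nest_append_iff hc.1.1 isDyckWord_nil]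
      exact ⟨hc, isNondecDyckHeightLe_nil_iff.mpr (by positivity), fun h => absurd rfl h⟩
    · have hkn : k < n := by
        by_contra! hle
        exact hne (List.eq_nil_of_length_eq_zero (by omega))
      refine ⟨by rw [List.length_append, length_pyramid, hlen]; omega, ?_⟩
      rw [pyramid_succ_eq_nest_append, List.append_nil,
        isNondecDyckHeightLe_nest_append_iff (isDyckWord_pyramid k) hv.1.1,
        isNondecDyckHeightLe_pyramid_iff]
      exact ⟨by omega, hv, fun _ => not_isValley_pyramid k⟩

lemma ncard_nondecDyckHeightLe_succ_succ (n h : ℕ) :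
    (nondecDyckHeightLe (n + 1) (h + 1)).ncard =
      (nondecDyckHeightLe n h).ncard +
        ∑ k ∈ Finset.range (h + 1), (nondecDyckHeightLe (n - k) (h + 1) \ {[]}).ncard := by
  have hpieces : ∀ k ∈ (Finset.range (h + 1) : Set ℕ),
      ((pyramid (k + 1) ++ ·) '' (nondecDyckHeightLe (n - k) (h + 1) \ {[]})).Finite :=
    fun k _ => ((finite_nondecDyckHeightLe _ _).sdiff).image _
  have hdisj : Disjoint (nest '' nondecDyckHeightLe n h)
      (⋃ k ∈ (Finset.range (h + 1) : Set ℕ),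
        (pyramid (k + 1) ++ ·) '' (nondecDyckHeightLe (n - k) (h + 1) \ {[]})) := by
    refine Set.disjoint_left.mpr ?_
    rintro _ ⟨c, ⟨-, hc⟩, rfl⟩ hmem
    obtain ⟨k, -, v, ⟨-, hne⟩, heq⟩ := Set.mem_iUnion₂.mp hmem
    rw [pyramid_succ_eq_nest_append, List.append_nil, ← List.append_nil (nest c)] at heq
    exact hne (nest_append_inj (isDyckWord_pyramid k) hc.1.1 heq).2
  have hpairwise : (Finset.range (h + 1) : Set ℕ).PairwiseDisjoint fun k =>
      (pyramid (k + 1) ++ ·) '' (nondecDyckHeightLe (n - k) (h + 1) \ {[]}) := by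
    intro k _ k' _ hkk'
    refine Set.disjoint_left.mpr ?_
    rintro _ ⟨v, -, rfl⟩ ⟨v', -, heq⟩
    rw [pyramid_succ_eq_nest_append, pyramid_succ_eq_nest_append, List.append_nil,
      List.append_nil] at heq
    have := congrArg List.length
      (nest_append_inj (isDyckWord_pyramid k') (isDyckWord_pyramid k) heq).1
    rw [length_pyramid, length_pyramid] at this
    omega
  rw [nondecDyckHeightLe_succ_succ, Set.ncard_union_eq hdisj
      ((finite_nondecDyckHeightLe _ _).image _) ((Finset.finite_toSet _).biUnion hpieces),
    Set.ncard_image_of_injective _ nest_injective,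
    (Finset.finite_toSet _).ncard_biUnion hpieces hpairwise, finsum_mem_coe_finset]
  simp only [Set.ncard_image_of_injective _ (List.append_right_injective _)]

lemma coeff_heightGF_sub_one (n h : ℕ) :
    coeff n (heightGF h - 1) = ((nondecDyckHeightLe n h \ {[]}).ncard : ℤ) := by
  rw [map_sub, heightGF, coeff_mk, numNondecDyckHeightLe_eq_ncard, coeff_one]
  rcases n with _ | n
  · simp [nondecDyckHeightLe_zero]
  · simp [Set.sdiff_singleton_eq_self (nil_notMem_nondecDyckHeightLe_succ n h)]

lemma heightGF_succ_sub_one (h : ℕ) :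
    heightGF (h + 1) - 1 =
      X * (heightGF h + (∑ k ∈ Finset.range (h + 1), X ^ k) * (heightGF (h + 1) - 1)) := by
  ext n
  rcases n with _ | n
  · simp [coeff_heightGF_sub_one, nondecDyckHeightLe_zero]
  rw [coeff_succ_X_mul, map_add, Finset.sum_mul, map_sum, coeff_heightGF_sub_one,
    Set.sdiff_singleton_eq_self (nil_notMem_nondecDyckHeightLe_succ n _),
    ncard_nondecDyckHeightLe_succ_succ, heightGF, coeff_mk, numNondecDyckHeightLe_eq_ncard]
  push_cast
  congr 1
  refine Finset.sum_congr rfl fun k _ => ?_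
  rw [coeff_X_pow_mul', coeff_heightGF_sub_one]
  split_ifs with hk
  · rfl
  · simp [Nat.sub_eq_zero_of_le (not_le.mp hk).le, nondecDyckHeightLe_zero]

/-- For every `h ≥ 1`:
`(1 − 2X + X^(h+1))·(F_h(X) − 1) = X(1 − X)·F_(h−1)(X)`. -/
theorem heightGF_recurrence (h : ℕ) (hh : 1 ≤ h) :
    ((1 : PowerSeries ℤ) - 2 * PowerSeries.X + PowerSeries.X ^ (h + 1)) *
        (heightGF h - 1) =
      PowerSeries.X * (1 - PowerSeries.X) * heightGF (h - 1) := by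
  obtain ⟨h, rfl⟩ := Nat.exists_eq_add_of_le' hh
  rw [Nat.add_sub_cancel]
  linear_combination (1 - X) * heightGF_succ_sub_one h +
    X * (heightGF (h + 1) - 1) * mul_neg_geom_sum (X : ℤ⟦X⟧) (h + 1)
end
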